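/- arXiv:0902.1843 — 2 statements merged into one kernel-verified Lean document; each statement's English description precedes it below -/
import Mathlib

section
/- Let n ≥ 3 be odd and d = (n-1)/2. Define the (d+1)×(d+1) matrix A by A_{ij} = cos(2πij/n) for i,j = 0,...,d, and the vector b = (2, 1 - 2cos(2π/n), 2 - 2cos(2π/n), ..., 2 - 2cos(2π/n))^T. Then the vector x with x_0 = (4/n)·d·(1 - cos(2π/n)) and x_i = (4/n)(cos(2π/n) - cos(2πi/n)) for i = 1,...,d satisfies Ax = b and x ≥ 0 componentwise. -/
/-!
Write `θ = 2π/n` and `S(k) = ∑_{j=1}^d cos(kjθ)`. The `k`-th powers of an `n`-th root of unity sum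
to zero unless `n ∣ k`, and the terms `j` and `n - j` of that sum agree, so `S(k) = -1/2` for
`n ∤ k`, while `S(0) = d`. By the product-to-sum formula, row `i` of `Ax` is
`x₀ + (4/n)(cos θ · S(i) - (S(i+1) + S(i-1))/2)`, and for `0 ≤ i ≤ d` the only index among
`i, i ± 1` divisible by `n = 2d + 1` is `0`; this gives `b`. Nonnegativity of `x` is the
monotonicity of `cos` on `[0, π]`, as `iθ ≤ π` for `i ≤ d`.
-/

open Finset Real
open scoped Matrix

theorem sum_range_cos_two_pi_mul_div_eq_zero (n : ℕ) (k : ℤ) (hk : ¬ (n : ℤ) ∣ k) :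
    ∑ j ∈ range n, cos (2 * π * k * j / n) = 0 := by
  rcases eq_or_ne n 0 with rfl | hn
  · simp
  set ζ : ℂ := Complex.exp (2 * π * Complex.I / n)
  have hζ : IsPrimitiveRoot ζ n := Complex.isPrimitiveRoot_exp n hn
  have hpow : ∀ j : ℕ, (ζ ^ k) ^ j = Complex.exp ((2 * π * k * j / n : ℝ) * Complex.I) := by
    intro j
    rw [← zpow_natCast, ← zpow_mul, ← Complex.exp_int_mul]
    push_cast
    ring_nf
  have hgeom : ∑ j ∈ range n, (ζ ^ k) ^ j = 0 := by
    rw [geom_sum_eq ((hζ.zpow_eq_one_iff_dvd k).not.mpr hk), ← zpow_natCast, ← zpow_mul,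
      mul_comm, zpow_mul, zpow_natCast, hζ.pow_eq_one, one_zpow, sub_self, zero_div]
  simpa only [Complex.re_sum, hpow, Complex.exp_ofReal_mul_I_re, Complex.zero_re]
    using congrArg Complex.re hgeom

theorem sum_range_eq_add_two_nsmul_of_symm {M : Type*} [AddCommMonoid M] {n d : ℕ}
    (hnd : n = 2 * d + 1) (f : ℕ → M) (hf : ∀ j ≤ n, f (n - j) = f j) :
    ∑ j ∈ range n, f j = f 0 + 2 • ∑ j ∈ range d, f (j + 1) := by
  subst hnd
  have hreflect : ∀ j ∈ range d, f (d + (d - 1 - j) + 1) = f (j + 1) := by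
    intro j hj
    have hjd : j < d := mem_range.mp hj
    rw [← hf (j + 1) (by omega)]
    congr 1
    omega
  rw [sum_range_succ', two_mul, sum_range_add, ← sum_range_reflect (fun j ↦ f (d + j + 1)),
    sum_congr rfl hreflect, two_nsmul, add_comm]

noncomputable def cosSum (n d : ℕ) (k : ℤ) : ℝ := ∑ j ∈ range d, cos (2 * π * k * (j + 1) / n)

theorem cosSum_zero (n d : ℕ) : cosSum n d 0 = d := by
  simp [cosSum]

theorem cosSum_of_not_dvd {n d : ℕ} (hnd : n = 2 * d + 1) {k : ℤ} (hk : ¬ (n : ℤ) ∣ k) :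
    cosSum n d k = -1 / 2 := by
  have hn : (n : ℝ) ≠ 0 := by rw [hnd]; positivity
  have hsymm : ∀ j ≤ n, cos (2 * π * k * ↑(n - j) / n) = cos (2 * π * k * j / n) := by
    intro j hj
    rw [Nat.cast_sub hj, ← cos_int_mul_two_pi_sub _ k]
    congr 1
    field_simp
    ring
  have h := sum_range_cos_two_pi_mul_div_eq_zero n k hk
  rw [sum_range_eq_add_two_nsmul_of_symm hnd _ hsymm] at h
  simp only [CharP.cast_eq_zero, mul_zero, zero_div, cos_zero, Nat.cast_add, Nat.cast_one,
    nsmul_eq_mul] at h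
  rw [cosSum]
  linarith

theorem sum_cos_mul_sub_cos_eq (n d : ℕ) (i : ℤ) :
    ∑ j ∈ range d, cos (2 * π * i * (j + 1) / n) * (cos (2 * π / n) - cos (2 * π * (j + 1) / n))
      = cos (2 * π / n) * cosSum n d i - (cosSum n d (i + 1) + cosSum n d (i - 1)) / 2 := by
  simp only [cosSum, mul_sum, ← sum_add_distrib, sum_div, ← sum_sub_distrib]
  refine sum_congr rfl fun j _ ↦ ?_
  have h := two_mul_cos_mul_cos (2 * π * i * (j + 1) / n) (2 * π * (j + 1) / n)
  push_cast
  rw [show 2 * π * (i + 1) * (j + 1) / n = 2 * π * i * (j + 1) / n + 2 * π * (j + 1) / n by ring,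
    show 2 * π * (i - 1) * (j + 1) / n = 2 * π * i * (j + 1) / n - 2 * π * (j + 1) / n by ring]
  linarith

noncomputable def cosMatrix (n d : ℕ) : Matrix (Fin (d + 1)) (Fin (d + 1)) ℝ :=
  Matrix.of fun i j ↦ cos (2 * π * i.val * j.val / n)

noncomputable def weight (n d : ℕ) (i : Fin (d + 1)) : ℝ :=
  if i.val = 0 then (4 / n) * d * (1 - cos (2 * π / n))
  else (4 / n) * (cos (2 * π / n) - cos (2 * π * i.val / n))

noncomputable def rhs (n d : ℕ) (i : Fin (d + 1)) : ℝ :=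
  if i.val = 0 then 2
  else if i.val = 1 then 1 - 2 * cos (2 * π / n)
  else 2 - 2 * cos (2 * π / n)

theorem weight_zero (n d : ℕ) : weight n d 0 = (4 / n) * d * (1 - cos (2 * π / n)) := by
  simp [weight]

theorem cosMatrix_mulVec_weight_apply (n d : ℕ) (i : Fin (d + 1)) :
    (cosMatrix n d *ᵥ weight n d) i = weight n d 0 + 4 / n *
      (cos (2 * π / n) * cosSum n d i - (cosSum n d (i + 1) + cosSum n d (i - 1)) / 2) := by
  rw [← sum_cos_mul_sub_cos_eq, mul_sum, Matrix.mulVec, dotProduct, Fin.sum_univ_succ]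
  congr 1
  · simp [cosMatrix]
  · rw [← Fin.sum_univ_eq_sum_range]
    refine sum_congr rfl fun j _ ↦ ?_
    simp only [cosMatrix, Matrix.of_apply, Fin.val_succ, Nat.cast_add, Nat.cast_one, weight,
      Nat.add_eq_zero_iff, one_ne_zero, and_false, ↓reduceIte, Int.cast_natCast]
    ring

theorem cosMatrix_mulVec_weight {n d : ℕ} (hnd : n = 2 * d + 1) (hd : 1 ≤ d) :
    cosMatrix n d *ᵥ weight n d = rhs n d := by
  funext i
  have hn : (n : ℝ) = 2 * d + 1 := by rw [hnd]; push_cast; ring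
  have hS : ∀ k : ℤ, k ≠ 0 → |k| < n → cosSum n d k = -1 / 2 := fun k hk0 hkn ↦
    cosSum_of_not_dvd hnd fun hdvd ↦ hk0 (Int.eq_zero_of_abs_lt_dvd hdvd hkn)
  have hid : (i : ℕ) ≤ d := Fin.is_le i
  rw [cosMatrix_mulVec_weight_apply, weight_zero, rhs]
  generalize (i : ℕ) = m at hid ⊢
  obtain rfl | rfl | hm : m = 0 ∨ m = 1 ∨ 1 < m := by omega
  · simp only [CharP.cast_eq_zero, cosSum_zero, zero_add, zero_sub, Int.reduceNeg, ↓reduceIte]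
    rw [hS 1 one_ne_zero (by simp; omega), hS (-1) (by simp) (by simp; omega), hn]
    field_simp
    ring
  · simp only [Nat.cast_one, Int.reduceAdd, sub_self, cosSum_zero, one_ne_zero, ↓reduceIte]
    rw [hS 1 one_ne_zero (by simp; omega), hS 2 two_ne_zero (by simp; omega), hn]
    field_simp
    ring
  · rw [if_neg (by omega), if_neg (by omega), hS m (by omega) (by simp; omega),
      hS (m + 1) (by omega) (by rw [abs_lt]; omega), hS (m - 1) (by omega) (by rw [abs_lt]; omega),
      hn]
    field_simp
    ring

theorem cos_two_pi_mul_div_le_cos_two_pi_div {n i : ℕ} (hi : 1 ≤ i) (hin : 2 * i ≤ n) :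
    cos (2 * π * i / n) ≤ cos (2 * π / n) := by
  have hi' : (1 : ℝ) ≤ i := by exact_mod_cast hi
  have hin' : 2 * (i : ℝ) ≤ n := by exact_mod_cast hin
  apply cos_le_cos_of_nonneg_of_le_pi (by positivity)
  · rw [div_le_iff₀ (by linarith)]
    nlinarith [pi_pos]
  · exact div_le_div_of_nonneg_right (le_mul_of_one_le_right (by positivity) hi') n.cast_nonneg

theorem weight_nonneg {n d : ℕ} (hdn : 2 * d ≤ n) (i : Fin (d + 1)) : 0 ≤ weight n d i := by
  rw [weight]
  split_ifs with hi
  · exact mul_nonneg (by positivity) (sub_nonneg.mpr (cos_le_one _))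
  · exact mul_nonneg (by positivity)
      (sub_nonneg.mpr (cos_two_pi_mul_div_le_cos_two_pi_div (by omega) (by omega)))

theorem stmt9 (n : ℕ) (hn : 3 ≤ n) (hodd : Odd n) (d : ℕ) (hd : d = (n - 1) / 2)
    (A : Matrix (Fin (d + 1)) (Fin (d + 1)) ℝ)
    (hA : ∀ i j : Fin (d + 1), A i j = Real.cos (2 * Real.pi * i.val * j.val / n))
    (b : Fin (d + 1) → ℝ)
    (hb : ∀ i : Fin (d + 1), b i =
      if i.val = 0 then 2
      else if i.val = 1 then 1 - 2 * Real.cos (2 * Real.pi / n)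
      else 2 - 2 * Real.cos (2 * Real.pi / n))
    (x : Fin (d + 1) → ℝ)
    (hx : ∀ i : Fin (d + 1), x i =
      if i.val = 0 then (4 / n) * d * (1 - Real.cos (2 * Real.pi / n))
      else (4 / n) * (Real.cos (2 * Real.pi / n) - Real.cos (2 * Real.pi * i.val / n))) :
    A.mulVec x = b ∧ ∀ i, 0 ≤ x i := by
  have hnd : n = 2 * d + 1 := by
    obtain ⟨m, rfl⟩ := hodd
    omega
  obtain rfl : A = cosMatrix n d := Matrix.ext hA
  obtain rfl : b = rhs n d := funext hb
  obtain rfl : x = weight n d := funext hx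
  exact ⟨cosMatrix_mulVec_weight hnd (by omega), weight_nonneg (by omega)⟩
end

section
/- Let n ≥ 4 be even and d = n/2. Define A_{ij} = cos(2πij/n) for i,j = 0,...,d and b = (2, 1 - 2cos(2π/n), 2 - 2cos(2π/n), ..., 2 - 2cos(2π/n))^T. Then the vector x with x_0 = (4/n)·((n-1)/2)·(1 - cos(2π/n)), x_i = (4/n)(cos(2π/n) - cos(2πi/n)) for 1 ≤ i ≤ d-1, and x_d = (2/n)(cos(2π/n) - cos(2πd/n)) satisfies Ax = b and x ≥ 0. -/
/-!
Write θ = 2π/n, c = cos θ and g(j) = (2/n)(c - cos jθ). Apart from a correction at j = 0, the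
entries x_j are g(j) counted once for each residue ±j mod n, so row k of A x folds out to the
full-period sum Σ_{j<n} cos(kjθ) g(j). Expanding cos(kjθ) cos(jθ) as a half-sum of cos((k ± 1)jθ),
orthogonality of the characters of ℤ/n (Σ_{j<n} cos(mjθ) = n·[n ∣ m]) leaves only the terms
m = k (for k = 0) and m = k - 1 (for k = 1). Nonnegativity is the monotonicity of cos on [0, π].
-/

open Finset Real

theorem Int.natCast_dvd_iff_eq_zero_of_abs_lt {n : ℕ} {m : ℤ} (h : |m| < n) :
    (n : ℤ) ∣ m ↔ m = 0 :=
  ⟨fun hdvd => Int.eq_zero_of_abs_lt_dvd hdvd h, fun hm => hm ▸ dvd_zero _⟩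


theorem Finset.sum_range_two_mul_of_symm {M : Type*} [AddCommMonoid M] {d : ℕ} (hd : 0 < d)
    (f : ℕ → M) (hf : ∀ j ≤ 2 * d, f (2 * d - j) = f j) :
    ∑ j ∈ range (2 * d), f j = f 0 + 2 • ∑ j ∈ Ico 1 d, f j + f d := by
  obtain ⟨e, rfl⟩ : ∃ e, d = e + 1 := ⟨d - 1, by omega⟩
  have hupper : ∑ k ∈ range e, f (e + 2 + k) = ∑ k ∈ range e, f (k + 1) := by
    rw [← sum_range_reflect (fun k => f (k + 1))]
    refine sum_congr rfl fun k hk => ?_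
    have hk := mem_range.1 hk
    rw [← hf _ (by omega)]
    congr 1
    omega
  have hmid : ∑ j ∈ Ico 1 (e + 1), f j = ∑ k ∈ range e, f (k + 1) := by
    rw [sum_Ico_eq_sum_range]
    simp only [add_tsub_cancel_right, add_comm 1]
  rw [show 2 * (e + 1) = e + 2 + e by ring, sum_range_add, hupper, hmid, sum_range_succ,
    sum_range_succ', two_nsmul]
  abel


theorem cos_two_pi_mul_natCast_sub_div {n : ℕ} (hn : n ≠ 0) (k : ℕ) {j : ℕ} (hj : j ≤ n) :
    cos (2 * π * k * (n - j : ℕ) / n) = cos (2 * π * k * j / n) := by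
  rw [← cos_nat_mul_two_pi_sub (2 * π * k * j / n) k, Nat.cast_sub hj]
  congr 1
  field_simp


theorem cos_two_pi_mul_div_le {n j : ℕ} (hj : 1 ≤ j) (hjn : 2 * j ≤ n) :
    cos (2 * π * j / n) ≤ cos (2 * π / n) := by
  have hn : (0 : ℝ) < n := by exact_mod_cast (show 0 < n by omega)
  have hj' : (1 : ℝ) ≤ j := by exact_mod_cast hj
  have hjn' : 2 * (j : ℝ) ≤ n := by exact_mod_cast hjn
  apply cos_le_cos_of_nonneg_of_le_pi (by positivity)
  · rw [div_le_iff₀ hn]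
    nlinarith [pi_gt_three]
  · exact div_le_div_of_nonneg_right (le_mul_of_one_le_right (by positivity) hj') hn.le


theorem sum_range_cos_two_pi_mul_div {n : ℕ} (hn : n ≠ 0) (m : ℤ) :
    ∑ j ∈ range n, cos (2 * π * m * j / n) = if (n : ℤ) ∣ m then (n : ℝ) else 0 := by
  have hζ := Complex.isPrimitiveRoot_exp n hn
  set w := Complex.exp (2 * π * Complex.I / n) ^ m
  have hterm (j : ℕ) : cos (2 * π * m * j / n) = (w ^ j).re := by
    rw [← zpow_natCast, ← zpow_mul, ← Complex.exp_int_mul, ← Complex.exp_ofReal_mul_I_re]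
    push_cast
    ring_nf
  simp_rw [hterm, ← Complex.re_sum]
  split_ifs with hdvd
  · simp [w, (hζ.zpow_eq_one_iff_dvd m).2 hdvd]
  · have hw : w ≠ 1 := fun h => hdvd ((hζ.zpow_eq_one_iff_dvd m).1 h)
    have hwn : w ^ n = 1 := by
      rw [← zpow_natCast, ← zpow_mul, hζ.zpow_eq_one_iff_dvd]
      exact dvd_mul_left _ _
    simp [geom_sum_eq hw, hwn]


theorem sum_range_cos_mul_sub_cos {n k : ℕ} (hk : k + 1 < n) :
    ∑ j ∈ range n, cos (2 * π * k * j / n) * (cos (2 * π / n) - cos (2 * π * j / n)) =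
      if k = 0 then n * cos (2 * π / n) else if k = 1 then -(n / 2) else 0 := by
  have hterm (j : ℕ) : cos (2 * π * k * j / n) * (cos (2 * π / n) - cos (2 * π * j / n)) =
      cos (2 * π / n) * cos (2 * π * ((k : ℤ) : ℝ) * j / n) -
        (cos (2 * π * ((k - 1 : ℤ) : ℝ) * j / n) +
          cos (2 * π * ((k + 1 : ℤ) : ℝ) * j / n)) / 2 := by
    have hsub : 2 * π * ((k - 1 : ℤ) : ℝ) * j / n = 2 * π * k * j / n - 2 * π * j / n := by
      push_cast; ring
    have hadd : 2 * π * ((k + 1 : ℤ) : ℝ) * j / n = 2 * π * k * j / n + 2 * π * j / n := by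
      push_cast; ring
    rw [hsub, hadd, cos_sub, cos_add, Int.cast_natCast]
    ring
  have habs (m : ℤ) (h₁ : -1 ≤ m) (h₂ : m ≤ k + 1) : |m| < n :=
    abs_lt.2 ⟨by omega, by omega⟩
  simp_rw [hterm, sum_sub_distrib, ← mul_sum, ← sum_div, sum_add_distrib,
    sum_range_cos_two_pi_mul_div (n := n) (by omega),
    Int.natCast_dvd_iff_eq_zero_of_abs_lt (habs k (by omega) (by omega)),
    Int.natCast_dvd_iff_eq_zero_of_abs_lt (habs (k - 1) (by omega) (by omega)),
    Int.natCast_dvd_iff_eq_zero_of_abs_lt (habs (k + 1) (by omega) (by omega))]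
  split_ifs <;> first | omega | ring

noncomputable def witness (n d j : ℕ) : ℝ :=
  if j = 0 then (4 / n) * ((n - 1 : ℝ) / 2) * (1 - cos (2 * π / n))
  else if j = d then (2 / n) * (cos (2 * π / n) - cos (2 * π * d / n))
  else (4 / n) * (cos (2 * π / n) - cos (2 * π * j / n))

theorem witness_nonneg {n d j : ℕ} (hn : 0 < n) (hdn : 2 * d ≤ n) (hj : j ≤ d) :
    0 ≤ witness n d j := by
  have hn' : (1 : ℝ) ≤ n := by exact_mod_cast hn
  unfold witness
  split_ifs with h0 hd
  · have := cos_le_one (2 * π / n)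
    have : (0 : ℝ) ≤ (n - 1 : ℝ) / 2 := by linarith
    have : (0 : ℝ) ≤ 1 - cos (2 * π / n) := by linarith
    positivity
  · have := cos_two_pi_mul_div_le (n := n) (j := d) (by omega) hdn
    have : (0 : ℝ) ≤ cos (2 * π / n) - cos (2 * π * d / n) := by linarith
    positivity
  · have := cos_two_pi_mul_div_le (n := n) (j := j) (by omega) (by omega)
    have : (0 : ℝ) ≤ cos (2 * π / n) - cos (2 * π * j / n) := by linarith
    positivity

theorem sum_cos_mul_witness {n d : ℕ} (hnd : n = 2 * d) (hd : 0 < d) (k : ℕ) :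
    ∑ j ∈ range (d + 1), cos (2 * π * k * j / n) * witness n d j =
      2 * (1 - cos (2 * π / n)) + 2 / n *
        ∑ j ∈ range n, cos (2 * π * k * j / n) * (cos (2 * π / n) - cos (2 * π * j / n)) := by
  set g : ℕ → ℝ := fun j => cos (2 * π * k * j / n) * (cos (2 * π / n) - cos (2 * π * j / n))
  have hn : n ≠ 0 := by omega
  have hsymm (j : ℕ) (hj : j ≤ 2 * d) : g (2 * d - j) = g j := by
    have h1 := cos_two_pi_mul_natCast_sub_div hn 1 (hnd ▸ hj)
    simp only [Nat.cast_one, mul_one] at h1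
    simp only [g, ← hnd, cos_two_pi_mul_natCast_sub_div hn k (hnd ▸ hj), h1]
  have hmid : ∑ j ∈ Ico 1 d, cos (2 * π * k * j / n) * witness n d j =
      ∑ j ∈ Ico 1 d, 4 / n * g j := by
    refine sum_congr rfl fun j hj => ?_
    have hj := mem_Ico.1 hj
    simp only [witness, g, if_neg (show j ≠ 0 by omega), if_neg (show j ≠ d by omega)]
    ring
  have hlast : cos (2 * π * k * d / n) * witness n d d = 2 / n * g d := by
    simp only [witness, g, if_neg (show d ≠ 0 by omega), if_true]
    ring
  have hfirst : cos (2 * π * k * (0 : ℕ) / n) * witness n d 0 =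
      2 * (1 - cos (2 * π / n)) + 2 / n * g 0 := by
    simp only [witness, g, if_true, Nat.cast_zero, mul_zero, zero_div, cos_zero]
    field_simp
    ring
  have hfold := sum_range_two_mul_of_symm hd g hsymm
  rw [← hnd] at hfold
  rw [sum_range_succ, range_eq_Ico, sum_eq_sum_Ico_succ_bot hd, hfirst, hmid, hlast, hfold,
    ← mul_sum, nsmul_eq_mul]
  ring

theorem stmt10 (n : ℕ) (hn : 4 ≤ n) (heven : Even n) (d : ℕ) (hd : d = n / 2)
    (A : Matrix (Fin (d + 1)) (Fin (d + 1)) ℝ)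
    (hA : ∀ i j : Fin (d + 1), A i j = Real.cos (2 * Real.pi * i.val * j.val / n))
    (b : Fin (d + 1) → ℝ)
    (hb : ∀ i : Fin (d + 1), b i =
      if i.val = 0 then 2
      else if i.val = 1 then 1 - 2 * Real.cos (2 * Real.pi / n)
      else 2 - 2 * Real.cos (2 * Real.pi / n))
    (x : Fin (d + 1) → ℝ)
    (hx : ∀ i : Fin (d + 1), x i =
      if i.val = 0 then (4 / n) * ((n - 1 : ℝ) / 2) * (1 - Real.cos (2 * Real.pi / n))
      else if i.val = d then (2 / n) * (Real.cos (2 * Real.pi / n) - Real.cos (2 * Real.pi * d / n))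
      else (4 / n) * (Real.cos (2 * Real.pi / n) - Real.cos (2 * Real.pi * i.val / n))) :
    A.mulVec x = b ∧ ∀ i, 0 ≤ x i := by
  have hnd : n = 2 * d := by
    obtain ⟨r, rfl⟩ := heven
    omega
  refine ⟨funext fun k => ?_, fun j => ?_⟩
  · have hk := k.isLt
    have hrow : A.mulVec x k = ∑ j ∈ range (d + 1), cos (2 * π * k * j / n) * witness n d j := by
      simp only [Matrix.mulVec, dotProduct, hA, hx]
      exact Fin.sum_univ_eq_sum_range (fun j => cos (2 * π * k * j / n) * witness n d j) (d + 1)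
    rw [hrow, sum_cos_mul_witness hnd (by omega), sum_range_cos_mul_sub_cos (by omega), hb]
    split_ifs <;> field_simp <;> ring
  · rw [hx]
    exact witness_nonneg (by omega) hnd.ge (Nat.lt_succ_iff.1 j.isLt)
end
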